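/- Assume f satisfies (f1) and (f2) with constant B ∈ [1,∞), and let ψ, φ, ε₁, ε₂ be the Emden–Fowler model data. For a function η define N[η](ρ) := (e^{−ρ+1}/4) · ( f(φ(ρ)+η(ρ)) − f(φ(ρ)) − f'(φ(ρ))·η(ρ) ). Let M > 0 and let η₁, η₂ be functions on (1,∞) satisfying |ηᵢ(ρ)| ≤ M · f(φ(ρ))·F(φ(ρ)) · sup_{τ ≥ ρ} ( ε₁(τ) + ε₂(τ) ) for i = 1, 2 and all sufficiently large ρ. Then there exist ρ₀ > 1 and C > 0 such that for all ρ ≥ ρ₀: | N[η₁](ρ) − N[η₂](ρ) | ≤ (C/ρ) · sup_{τ ≥ ρ} ( ε₁(τ) + ε₂(τ) ) · | η₁(ρ) − η₂(ρ) |. -/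

import Mathlib

open MeasureTheory Filter

/-- `Fint f s = ∫_s^∞ dτ / f(τ)`. -/
noncomputable def Fint (f : ℝ → ℝ) (s : ℝ) : ℝ := ∫ τ in Set.Ioi s, 1 / f τ

/-- `1/B₁[f](s) = (−log F(s))·(1 − f'(s)·F(s))`, with `G` playing the role of `F`. -/
noncomputable def invB1 (f G : ℝ → ℝ) (s : ℝ) : ℝ :=
  (-Real.log (G s)) * (1 - deriv f s * G s)

/-- `1/B₂[f](s) = f'(s)·F(s)·(log F(s))²·(f(s)·f''(s)·F(s)/f'(s) − 1)`,
with `G` playing the role of `F`. -/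
noncomputable def invB2 (f G : ℝ → ℝ) (s : ℝ) : ℝ :=
  deriv f s * G s * (Real.log (G s)) ^ 2 *
    (f s * deriv (deriv f) s * G s / deriv f s - 1)

/-- The model singular solution `v`. -/
noncomputable def modelv (B t : ℝ) : ℝ :=
  if B = 1 then Real.log (-2 * Real.log t) else (-2 * Real.log t) ^ ((B - 1) / B)

/-- The model nonlinearity `g`. -/
noncomputable def modelg (B s : ℝ) : ℝ :=
  if B = 1 then 4 * Real.exp (Real.exp s - 2 * s)
  else (4 / (B * (B / (B - 1)))) * s ^ (1 - 2 * (B / (B - 1))) * Real.exp (s ^ (B / (B - 1)))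

/-- The model function `G(s) = ∫_s^∞ dτ/g(τ)` in closed form. -/
noncomputable def modelG (B s : ℝ) : ℝ :=
  if B = 1 then (1 / 4) * (Real.exp s + 1) * Real.exp (-Real.exp s)
  else (B / 4) * (s ^ (B / (B - 1)) + 1) * Real.exp (-(s ^ (B / (B - 1))))

/-- The Emden–Fowler model profile `ψ`. -/
noncomputable def modelpsi (B ρ : ℝ) : ℝ :=
  if B = 1 then Real.log (ρ - 1) else (ρ - 1) ^ ((B - 1) / B)

/-- `ε₁(ρ) = |1/B₁[f](φ(ρ)) − 1/B₁[g](ψ(ρ))|`. -/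
noncomputable def eps1 (f φ : ℝ → ℝ) (B ρ : ℝ) : ℝ :=
  |invB1 f (Fint f) (φ ρ) - invB1 (modelg B) (modelG B) (modelpsi B ρ)|

/-- `ε₂(ρ) = |1/B₂[f](φ(ρ)) − 1/B₂[g](ψ(ρ))|`. -/
noncomputable def eps2 (f φ : ℝ → ℝ) (B ρ : ℝ) : ℝ :=
  |invB2 f (Fint f) (φ ρ) - invB2 (modelg B) (modelG B) (modelpsi B ρ)|

/-- The inhomogeneous term
`I(ρ) = f(φ)F(φ) · ψ'² / (g(ψ)²G(ψ)²) · (f'(φ)F(φ) − g'(ψ)G(ψ))`. -/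
noncomputable def Ifun (f φ : ℝ → ℝ) (B ρ : ℝ) : ℝ :=
  f (φ ρ) * Fint f (φ ρ) *
    ((deriv (modelpsi B) ρ) ^ 2 / ((modelg B (modelpsi B ρ)) ^ 2 * (modelG B (modelpsi B ρ)) ^ 2)) *
    (deriv f (φ ρ) * Fint f (φ ρ) - deriv (modelg B) (modelpsi B ρ) * modelG B (modelpsi B ρ))

/-- The nonlinear remainder operator
`N[η](ρ) = (e^{−ρ+1}/4)(f(φ+η) − f(φ) − f'(φ)η)`. -/
noncomputable def Nop (f φ η : ℝ → ℝ) (ρ : ℝ) : ℝ :=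
  (Real.exp (-ρ + 1) / 4) * (f (φ ρ + η ρ) - f (φ ρ) - deriv f (φ ρ) * η ρ)

/-!
Put `p = φ(ρ)`, `S(ρ) = sup_{τ ≥ ρ} (ε₁ + ε₂)(τ)` and `δ = M f(p) F(p) S(ρ)`. Since
`e^{-ρ+1}/4 = F(p)/(Bρ)`, the difference `N[η₁] - N[η₂]` is `F(p)/(Bρ)` times the increment of
`t ↦ f(p + t) - f'(p) t` between `η₂(ρ)` and `η₁(ρ)`, which is at most `δ |η₁ - η₂| sup |f''|`
over `[p - δ, p + δ]`. By (f2), on a tail `f' F ≈ 1` and `f f'' F / f' ≈ 1` (the latter because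
`(log F)² → ∞`), so `|f''| ≤ 3 / (f F²)`. On the window, `(f F)' = f' F - 1` is small, so `f F`
stays above `f(p) F(p) / 2`, and then `(log (f F²))' = (f' F - 2) / (f F)` is `O(1 / (f(p) F(p)))`:
`f F²` changes by a factor at most `e^{3 M S}`. This gives the bound with `C = 3 M e^{3 M K} / B`,
where `K` bounds `S` for large `ρ`.
-/

open Set Topology

section Fint

variable {f : ℝ → ℝ} {s₀ : ℝ}

lemma Fint_pos {s : ℝ} (hfpos : ∀ τ > s, 0 < f τ)
    (hint : IntegrableOn (fun τ => 1 / f τ) (Ioi s)) : 0 < Fint f s := by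
  have hpos : ∀ τ ∈ Ioi s, 0 < 1 / f τ := fun τ hτ => one_div_pos.2 (hfpos τ hτ)
  refine (setIntegral_pos_iff_support_of_nonneg_ae
    ((ae_restrict_iff' measurableSet_Ioi).2 (ae_of_all _ fun τ hτ => (hpos τ hτ).le)) hint).2 ?_
  calc (0 : ENNReal) < volume (Ioi s) := by simp
    _ ≤ _ := measure_mono (subset_inter (fun τ hτ => (hpos τ hτ).ne') subset_rfl)

lemma Fint_le_Fint {a b : ℝ} (hab : a ≤ b) (hfpos : ∀ τ > a, 0 < f τ)
    (hint : IntegrableOn (fun τ => 1 / f τ) (Ioi a)) : Fint f b ≤ Fint f a :=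
  setIntegral_mono_set hint ((ae_restrict_iff' measurableSet_Ioi).2
    (ae_of_all _ fun τ hτ => (one_div_pos.2 (hfpos τ hτ)).le)) (Ioi_subset_Ioi hab).eventuallyLE

lemma hasDerivAt_Fint {s : ℝ} (hs : s₀ < s) (hcont : ContinuousOn (fun τ => 1 / f τ) (Ioi s₀))
    (hint : ∀ t > s₀, IntegrableOn (fun τ => 1 / f τ) (Ioi t)) :
    HasDerivAt (Fint f) (-(1 / f s)) s := by
  set c := (s₀ + s) / 2
  have hc : s₀ < c := by simp only [c]; linarith
  have hcs : c < s := by simp only [c]; linarith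
  have hii : IntervalIntegrable (fun τ => 1 / f τ) volume c s := by
    refine (hcont.mono fun x hx => hc.trans_le ?_).intervalIntegrable
    rw [uIcc_of_le hcs.le] at hx
    exact hx.1
  have hder : HasDerivAt (fun t => Fint f c - ∫ τ in c..t, 1 / f τ) (-(1 / f s)) s :=
    (intervalIntegral.integral_hasDerivAt_right hii
      (hcont.stronglyMeasurableAtFilter isOpen_Ioi s hs)
      (hcont.continuousAt (Ioi_mem_nhds hs))).const_sub _
  refine hder.congr_of_eventuallyEq ?_
  filter_upwards [Ioi_mem_nhds hcs] with t ht
  rw [Fint, Fint, ← intervalIntegral.integral_interval_add_Ioi (hint c hc) (hint t (hc.trans ht))]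
  ring

lemma tendsto_atTop_of_tendsto_Fint_comp {α : Type*} {l : Filter α} {φ : α → ℝ}
    (hfpos : ∀ s > s₀, 0 < f s) (hint : ∀ s > s₀, IntegrableOn (fun τ => 1 / f τ) (Ioi s))
    (hφ : ∀ᶠ x in l, s₀ < φ x) (h : Tendsto (fun x => Fint f (φ x)) l (𝓝 0)) :
    Tendsto φ l atTop := by
  refine tendsto_atTop.2 fun c => ?_
  set c' := max c s₀ + 1
  have hc' : s₀ < c' := by simp only [c']; linarith [le_max_right c s₀]
  have hFc' := Fint_pos (fun τ hτ => hfpos τ (hc'.trans hτ)) (hint c' hc')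
  filter_upwards [h.eventually_lt_const hFc', hφ] with x hlt hx
  by_contra! hxc
  have hle : φ x ≤ c' := by simp only [c']; linarith [le_max_left c s₀]
  exact (Fint_le_Fint hle (fun τ hτ => hfpos τ (hx.trans hτ)) (hint _ hx)).not_gt hlt

end Fint

lemma exists_eventually_sSup_image_Ici_le (g : ℝ → ℝ) :
    ∃ K, 0 ≤ K ∧ ∀ᶠ ρ in atTop, sSup (g '' Ici ρ) ≤ K := by
  by_cases h : ∃ a, BddAbove (g '' Ici a)
  · obtain ⟨a, ha⟩ := h
    refine ⟨max (sSup (g '' Ici a)) 0, le_max_right _ _, ?_⟩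
    filter_upwards [eventually_ge_atTop a] with ρ hρ
    exact (csSup_le_csSup ha (nonempty_Ici.image g) (image_mono (Ici_subset_Ici.2 hρ))).trans
      (le_max_left _ _)
  · -- `sSup` of a set that is not bounded above is `0`
    refine ⟨0, le_rfl, Eventually.of_forall fun ρ => ?_⟩
    rw [csSup_of_not_bddAbove fun hρ => h ⟨ρ, hρ⟩, Real.sSup_empty]

lemma tendsto_ratio_of_tendsto_invB2 {f G : ℝ → ℝ} {c : ℝ} (hG : Tendsto G atTop (𝓝[>] 0))
    (h₁ : Tendsto (fun s => deriv f s * G s) atTop (𝓝 1))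
    (h₂ : Tendsto (invB2 f G) atTop (𝓝 c)) :
    Tendsto (fun s => f s * deriv (deriv f) s * G s / deriv f s) atTop (𝓝 1) := by
  have hlog : Tendsto (fun s => Real.log (G s)) atTop atBot :=
    Real.tendsto_log_nhdsGT_zero.comp hG
  have hsq : Tendsto (fun s => (Real.log (G s)) ^ 2) atTop atTop := by
    simpa only [sq] using hlog.atBot_mul_atBot₀ hlog
  have hq := (h₂.mul (h₁.inv₀ one_ne_zero)).mul hsq.inv_tendsto_atTop
  rw [mul_zero] at hq
  have h := hq.const_add 1
  rw [add_zero] at h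
  refine h.congr' ?_
  filter_upwards [h₁.eventually_ne one_ne_zero, hlog.eventually_ne_atBot 0] with s hs hl
  have hf' : deriv f s ≠ 0 := left_ne_zero_of_mul hs
  have hG : G s ≠ 0 := right_ne_zero_of_mul hs
  simp only [invB2, Pi.inv_apply]
  field_simp
  ring

lemma abs_sub_linearization_sub_le {f f' f'' : ℝ → ℝ} {p δ C t₁ t₂ : ℝ}
    (hf : ∀ x ∈ Icc (p - δ) (p + δ), HasDerivAt f (f' x) x)
    (hf' : ∀ x ∈ Icc (p - δ) (p + δ), HasDerivAt f' (f'' x) x)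
    (hC : ∀ x ∈ Icc (p - δ) (p + δ), |f'' x| ≤ C) (ht₁ : |t₁| ≤ δ) (ht₂ : |t₂| ≤ δ) :
    |(f (p + t₁) - f' p * t₁) - (f (p + t₂) - f' p * t₂)| ≤ C * δ * |t₁ - t₂| := by
  have hmem : ∀ t ∈ Icc (-δ) δ, p + t ∈ Icc (p - δ) (p + δ) := fun t ht =>
    ⟨by linarith [ht.1], by linarith [ht.2]⟩
  have hδ : 0 ≤ δ := (abs_nonneg t₁).trans ht₁
  have hp : p ∈ Icc (p - δ) (p + δ) := ⟨by linarith, by linarith⟩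
  have hf'_sub : ∀ t ∈ Icc (-δ) δ, |f' (p + t) - f' p| ≤ C * δ := fun t ht => by
    have := (convex_Icc _ _).norm_image_sub_le_of_norm_hasDerivWithin_le
      (fun x hx => (hf' x hx).hasDerivWithinAt) hC hp (hmem t ht)
    simp only [Real.norm_eq_abs, add_sub_cancel_left] at this
    exact this.trans (mul_le_mul_of_nonneg_left (abs_le.2 ⟨ht.1, ht.2⟩)
      ((abs_nonneg _).trans (hC p hp)))
  have hderiv : ∀ t ∈ Icc (-δ) δ, HasDerivWithinAt (fun t => f (p + t) - f' p * t)
      (f' (p + t) - f' p) (Icc (-δ) δ) t := fun t ht => by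
    have h := ((hf _ (hmem t ht)).comp_const_add p t).sub ((hasDerivAt_id' t).const_mul (f' p))
    rw [mul_one] at h
    exact h.hasDerivWithinAt
  simpa [Real.norm_eq_abs, abs_sub_comm t₁ t₂] using
    (convex_Icc (-δ) δ).norm_image_sub_le_of_norm_hasDerivWithin_le hderiv hf'_sub
      (abs_le.1 ht₂) (abs_le.1 ht₁)

/-- The hypotheses (f1)–(f2) in the quantitative form they take on a tail `[s₁, ∞)`,
with `f'`, `f''` standing for the derivatives of `f` and `G` for `F`. -/
structure TailRegular (f f' f'' G : ℝ → ℝ) (s₁ θ : ℝ) : Prop where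
  hasDerivAt : ∀ s ≥ s₁, HasDerivAt f (f' s) s
  hasDerivAt_deriv : ∀ s ≥ s₁, HasDerivAt f' (f'' s) s
  hasDerivAt_G : ∀ s ≥ s₁, HasDerivAt G (-(1 / f s)) s
  pos : ∀ s ≥ s₁, 0 < f s
  G_pos : ∀ s ≥ s₁, 0 < G s
  le_half : θ ≤ 1 / 2
  abs_deriv_mul_G_sub_one_le : ∀ s ≥ s₁, |f' s * G s - 1| ≤ θ
  abs_mul_deriv2_mul_G_div_le : ∀ s ≥ s₁, |f s * f'' s * G s / f' s| ≤ 2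

namespace TailRegular

variable {f f' f'' G : ℝ → ℝ} {s₁ θ p δ : ℝ} (h : TailRegular f f' f'' G s₁ θ)
include h

lemma nonneg : 0 ≤ θ :=
  (abs_nonneg _).trans (h.abs_deriv_mul_G_sub_one_le s₁ le_rfl)

lemma hasDerivAt_mul {s : ℝ} (hs : s₁ ≤ s) :
    HasDerivAt (fun s => f s * G s) (f' s * G s - 1) s := by
  have hmul := (h.hasDerivAt s hs).mul (h.hasDerivAt_G s hs)
  rwa [mul_neg, mul_one_div_cancel (h.pos s hs).ne', ← sub_eq_add_neg] at hmul

lemma abs_mul_sub_mul_le {a b : ℝ} (ha : s₁ ≤ a) (hb : s₁ ≤ b) :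
    |f b * G b - f a * G a| ≤ θ * |b - a| :=
  (convex_Ici s₁).norm_image_sub_le_of_norm_hasDerivWithin_le
    (fun _ hs => (h.hasDerivAt_mul hs).hasDerivWithinAt)
    h.abs_deriv_mul_G_sub_one_le ha hb

lemma deriv_mul_G_mem_Icc {s : ℝ} (hs : s₁ ≤ s) : f' s * G s ∈ Icc (1 / 2) (3 / 2) := by
  have := abs_le.1 ((h.abs_deriv_mul_G_sub_one_le s hs).trans h.le_half)
  constructor <;> linarith [this.1, this.2]

/-- Since `(f G)' = f' G - 1` is small, `f G` grows sublinearly, so a window of radius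
`κ f(p) G(p)` around a large enough `p` stays inside the tail. -/
lemma le_sub_of_le_mul_mul {κ : ℝ} (hκ₀ : 0 ≤ κ) (hκ : θ * κ ≤ 1 / 2)
    (hp : s₁ + 2 * κ * (f s₁ * G s₁) ≤ p) (hδ : δ ≤ κ * (f p * G p)) : s₁ ≤ p - δ := by
  have hfG₁ : 0 < f s₁ * G s₁ := mul_pos (h.pos s₁ le_rfl) (h.G_pos s₁ le_rfl)
  have hps₁ : s₁ ≤ p := by nlinarith
  have hgrowth := (abs_le.1 (h.abs_mul_sub_mul_le le_rfl hps₁)).2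
  rw [abs_of_nonneg (sub_nonneg.2 hps₁)] at hgrowth
  nlinarith [mul_le_mul_of_nonneg_left hgrowth hκ₀]

lemma half_mul_le_mul (hW : s₁ ≤ p - δ) (hδ : θ * δ ≤ f p * G p / 2) {ζ : ℝ}
    (hζ : ζ ∈ Icc (p - δ) (p + δ)) : f p * G p / 2 ≤ f ζ * G ζ := by
  have hζp : |ζ - p| ≤ δ := abs_sub_le_iff.2 ⟨by linarith [hζ.2], by linarith [hζ.1]⟩
  have hdiff := h.abs_mul_sub_mul_le (hW.trans (by linarith [hζ.1, hζ.2] : p - δ ≤ p))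
    (hW.trans hζ.1)
  linarith [(abs_le.1 hdiff).1, mul_le_mul_of_nonneg_left hζp h.nonneg]

/-- On the window, `|(log (f G²))'| = |f' G - 2| / (f G) ≤ 3 / (f(p) G(p))`. -/
lemma exp_neg_mul_le_mul_sq (hW : s₁ ≤ p - δ) (hδ : θ * δ ≤ f p * G p / 2) {ζ : ℝ}
    (hζ : ζ ∈ Icc (p - δ) (p + δ)) :
    Real.exp (-(3 * δ / (f p * G p))) * (f p * G p ^ 2) ≤ f ζ * G ζ ^ 2 := by
  set W := Icc (p - δ) (p + δ)
  have hpW : p ∈ W := ⟨by linarith [hζ.1, hζ.2], by linarith [hζ.1, hζ.2]⟩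
  have hfp := h.pos p (hW.trans hpW.1)
  have hGp := h.G_pos p (hW.trans hpW.1)
  have hfGp : 0 < f p * G p := mul_pos hfp hGp
  have hderiv : ∀ x ∈ W, HasDerivWithinAt (fun s => Real.log (f s * G s * G s))
      ((f' x * G x - 2) / (f x * G x)) W x := fun x hx => by
    have hx₁ := hW.trans hx.1
    have hG := h.G_pos x hx₁
    have hf := h.pos x hx₁
    refine (((h.hasDerivAt_mul hx₁).mul (h.hasDerivAt_G x hx₁)).log
      (mul_pos (mul_pos hf hG) hG).ne'
      |>.congr_deriv ?_).hasDerivWithinAt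
    simp only [Pi.mul_apply]
    field_simp
    ring
  have hbound : ∀ x ∈ W, ‖(f' x * G x - 2) / (f x * G x)‖ ≤ 3 / (f p * G p) := fun x hx => by
    have hhalf := h.half_mul_le_mul hW hδ hx
    obtain ⟨hlo, hhi⟩ := h.deriv_mul_G_mem_Icc (hW.trans hx.1)
    rw [Real.norm_eq_abs, abs_div, abs_of_pos (by linarith : 0 < f x * G x),
      div_le_div_iff₀ (by linarith) hfGp, abs_of_neg (by linarith)]
    nlinarith
  have hmvt := (convex_Icc _ _).norm_image_sub_le_of_norm_hasDerivWithin_le hderiv hbound hpW hζ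
  have hζp : |ζ - p| ≤ δ := abs_sub_le_iff.2 ⟨by linarith [hζ.2], by linarith [hζ.1]⟩
  have hlog : Real.log (f p * G p * G p) - 3 * δ / (f p * G p) ≤ Real.log (f ζ * G ζ * G ζ) := by
    have := (abs_le.1 hmvt).1
    rw [Real.norm_eq_abs] at this
    have := mul_le_mul_of_nonneg_left hζp (by positivity : (0 : ℝ) ≤ 3 / (f p * G p))
    rw [show 3 * δ / (f p * G p) = 3 / (f p * G p) * δ by ring]
    linarith
  have hpos : 0 < f ζ * G ζ * G ζ := by
    have := h.G_pos ζ (hW.trans hζ.1); have := h.pos ζ (hW.trans hζ.1); positivity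
  have := Real.exp_le_exp.2 hlog
  rw [Real.exp_sub, Real.exp_log (by positivity), Real.exp_log hpos] at this
  calc Real.exp (-(3 * δ / (f p * G p))) * (f p * G p ^ 2)
      = f p * G p * G p / Real.exp (3 * δ / (f p * G p)) := by rw [Real.exp_neg]; ring
    _ ≤ f ζ * G ζ * G ζ := this
    _ = f ζ * G ζ ^ 2 := by ring

lemma abs_deriv2_le (hW : s₁ ≤ p - δ) (hδ : θ * δ ≤ f p * G p / 2) {ζ : ℝ}
    (hζ : ζ ∈ Icc (p - δ) (p + δ)) :
    |f'' ζ| ≤ 3 * Real.exp (3 * δ / (f p * G p)) / (f p * G p ^ 2) := by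
  have hζ₁ := hW.trans hζ.1
  have hf := h.pos ζ hζ₁
  have hG := h.G_pos ζ hζ₁
  have hp₁ : s₁ ≤ p := hW.trans (by linarith [hζ.1, hζ.2])
  have hfGp : 0 < f p * G p ^ 2 := by have := h.pos p hp₁; have := h.G_pos p hp₁; positivity
  obtain ⟨hlo, hhi⟩ := h.deriv_mul_G_mem_Icc hζ₁
  have hf' : f' ζ ≠ 0 := by rintro h0; rw [h0, zero_mul] at hlo; linarith
  have hsplit : f'' ζ = f ζ * f'' ζ * G ζ / f' ζ * (f' ζ * G ζ) / (f ζ * G ζ ^ 2) := by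
    field_simp
  have hratio := h.abs_mul_deriv2_mul_G_div_le ζ hζ₁
  have hlower := h.exp_neg_mul_le_mul_sq hW hδ hζ
  calc |f'' ζ| ≤ 3 / (f ζ * G ζ ^ 2) := by
        rw [hsplit, abs_div, abs_mul, abs_of_pos (by linarith : 0 < f' ζ * G ζ),
          abs_of_pos (by positivity : 0 < f ζ * G ζ ^ 2)]
        gcongr
        nlinarith [abs_nonneg (f ζ * f'' ζ * G ζ / f' ζ)]
    _ ≤ 3 / (Real.exp (-(3 * δ / (f p * G p))) * (f p * G p ^ 2)) := by gcongr
    _ = 3 * Real.exp (3 * δ / (f p * G p)) / (f p * G p ^ 2) := by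
        rw [Real.exp_neg]; field_simp

lemma abs_sub_linearization_sub_le (hW : s₁ ≤ p - δ)
    (hδ : θ * δ ≤ f p * G p / 2) {t₁ t₂ : ℝ} (ht₁ : |t₁| ≤ δ) (ht₂ : |t₂| ≤ δ) :
    |(f (p + t₁) - f' p * t₁) - (f (p + t₂) - f' p * t₂)|
      ≤ 3 * Real.exp (3 * δ / (f p * G p)) / (f p * G p ^ 2) * δ * |t₁ - t₂| :=
  _root_.abs_sub_linearization_sub_le (fun x hx => h.hasDerivAt x (hW.trans hx.1))
    (fun x hx => h.hasDerivAt_deriv x (hW.trans hx.1)) (fun _ hx => h.abs_deriv2_le hW hδ hx)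
    ht₁ ht₂

end TailRegular

lemma exists_tailRegular {f : ℝ → ℝ} {s₀ c θ : ℝ} (hf : ContDiffOn ℝ 2 f (Ioi s₀))
    (hfpos : ∀ s > s₀, 0 < f s) (hfint : ∀ s > s₀, IntegrableOn (fun τ => 1 / f τ) (Ioi s))
    (hf2a : Tendsto (fun s => deriv f s * Fint f s) atTop (𝓝 1))
    (hf2b : Tendsto (invB2 f (Fint f)) atTop (𝓝 c)) (hθ : 0 < θ) (hθ' : θ ≤ 1 / 2) :
    ∃ s₁ > s₀, TailRegular f (deriv f) (deriv (deriv f)) (Fint f) s₁ θ := by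
  have hFpos : ∀ s > s₀, 0 < Fint f s := fun s hs =>
    Fint_pos (fun τ hτ => hfpos τ (hs.trans hτ)) (hfint s hs)
  have hF0 : Tendsto (Fint f) atTop (𝓝[>] 0) := tendsto_nhdsWithin_iff.2
    ⟨tendsto_integral_Ioi_zero tendsto_id, (eventually_gt_atTop s₀).mono hFpos⟩
  have hratio := (tendsto_ratio_of_tendsto_invB2 hF0 hf2a hf2b).eventually
    (Icc_mem_nhds (zero_lt_one' ℝ) one_lt_two)
  have hclose := hf2a.eventually (Metric.closedBall_mem_nhds 1 hθ)
  obtain ⟨a, ha⟩ := eventually_atTop.1 (hclose.and hratio)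
  have hcont : ContinuousOn (fun τ => 1 / f τ) (Ioi s₀) :=
    continuousOn_const.div hf.continuousOn fun x hx => (hfpos x hx).ne'
  have hf' : ContDiffOn ℝ 1 (deriv f) (Ioi s₀) := hf.deriv_of_isOpen isOpen_Ioi (by norm_num)
  set s₁ := max a (s₀ + 1)
  have hs₁ : s₀ < s₁ := by simp only [s₁]; linarith [le_max_right a (s₀ + 1)]
  have hs₁a : a ≤ s₁ := le_max_left _ _
  refine ⟨s₁, hs₁, fun s hs => ?_, fun s hs => ?_, fun s hs => ?_, fun s hs => ?_,
    fun s hs => ?_, hθ', fun s hs => ?_, fun s hs => ?_⟩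
  · exact ((hf.differentiableOn (by norm_num)).differentiableAt
      (Ioi_mem_nhds (hs₁.trans_le hs))).hasDerivAt
  · exact ((hf'.differentiableOn (by norm_num)).differentiableAt
      (Ioi_mem_nhds (hs₁.trans_le hs))).hasDerivAt
  · exact hasDerivAt_Fint (hs₁.trans_le hs) hcont hfint
  · exact hfpos s (hs₁.trans_le hs)
  · exact hFpos s (hs₁.trans_le hs)
  · simpa [Real.dist_eq] using (ha s (hs₁a.trans hs)).1
  · obtain ⟨h0, h2⟩ := (ha s (hs₁a.trans hs)).2
    exact abs_le.2 ⟨by linarith, h2⟩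

lemma Nop_sub_Nop_eq {f φ η₁ η₂ : ℝ → ℝ} {B ρ : ℝ} (hB : B ≠ 0) (hρ : ρ ≠ 0)
    (hFφ : Fint f (φ ρ) = B / 4 * ρ * Real.exp (-ρ + 1)) :
    Nop f φ η₁ ρ - Nop f φ η₂ ρ = Fint f (φ ρ) / (B * ρ) *
      ((f (φ ρ + η₁ ρ) - deriv f (φ ρ) * η₁ ρ) - (f (φ ρ + η₂ ρ) - deriv f (φ ρ) * η₂ ρ)) := by
  rw [hFφ, Nop, Nop]
  field_simp
  ring

lemma tendsto_atTop_of_Fint_eq {f φ : ℝ → ℝ} {s₀ B : ℝ}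
    (hfpos : ∀ s > s₀, 0 < f s) (hfint : ∀ s > s₀, IntegrableOn (fun τ => 1 / f τ) (Ioi s))
    (hφ : ∀ ρ > (1 : ℝ), s₀ < φ ρ ∧ Fint f (φ ρ) = B / 4 * ρ * Real.exp (-ρ + 1)) :
    Tendsto φ atTop atTop := by
  refine tendsto_atTop_of_tendsto_Fint_comp hfpos hfint
    ((eventually_gt_atTop 1).mono fun ρ hρ => (hφ ρ hρ).1) ?_
  have h := (Real.tendsto_pow_mul_exp_neg_atTop_nhds_zero 1).const_mul (B / 4 * Real.exp 1)
  rw [mul_zero] at h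
  refine h.congr' ((eventually_gt_atTop 1).mono fun ρ hρ => ?_)
  dsimp only
  rw [(hφ ρ hρ).2, Real.exp_add]
  ring

lemma TailRegular.abs_Nop_sub_le {f φ η₁ η₂ : ℝ → ℝ} {s₁ θ B M K S ρ : ℝ}
    (hreg : TailRegular f (deriv f) (deriv (deriv f)) (Fint f) s₁ θ) (hB : 0 < B) (hρ : 0 < ρ)
    (hM : 0 ≤ M) (hS₀ : 0 ≤ S) (hSK : S ≤ K) (hθ : θ * (M * K) ≤ 1 / 2)
    (hφρ : s₁ + 2 * (M * K) * (f s₁ * Fint f s₁) ≤ φ ρ)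
    (hFφ : Fint f (φ ρ) = B / 4 * ρ * Real.exp (-ρ + 1))
    (hη₁ : |η₁ ρ| ≤ M * f (φ ρ) * Fint f (φ ρ) * S)
    (hη₂ : |η₂ ρ| ≤ M * f (φ ρ) * Fint f (φ ρ) * S) :
    |Nop f φ η₁ ρ - Nop f φ η₂ ρ| ≤ 3 * M * Real.exp (3 * M * K) / B / ρ * S * |η₁ ρ - η₂ ρ| := by
  set p := φ ρ
  have hMK : 0 ≤ M * K := mul_nonneg hM (hS₀.trans hSK)
  have hps₁ : s₁ ≤ p := by
    have := mul_nonneg (mul_nonneg (mul_nonneg zero_le_two hMK)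
      (hreg.pos s₁ le_rfl).le) (hreg.G_pos s₁ le_rfl).le
    linarith
  have hfp := hreg.pos p hps₁
  have hFp := hreg.G_pos p hps₁
  have hfFp : 0 < f p * Fint f p := mul_pos hfp hFp
  set δ := M * f p * Fint f p * S
  have hδK : δ ≤ M * K * (f p * Fint f p) := by
    have := mul_le_mul_of_nonneg_left hSK (mul_nonneg hM hfFp.le)
    simp only [δ]; linarith
  have hW := hreg.le_sub_of_le_mul_mul hMK hθ hφρ hδK
  have hδθ : θ * δ ≤ f p * Fint f p / 2 := by
    nlinarith [mul_le_mul_of_nonneg_left hδK hreg.nonneg]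
  have hlin := hreg.abs_sub_linearization_sub_le hW hδθ hη₁ hη₂
  have hexp : 3 * δ / (f p * Fint f p) = 3 * M * S := by
    simp only [δ]; field_simp [hfp.ne', hFp.ne']
  rw [hexp] at hlin
  rw [Nop_sub_Nop_eq hB.ne' hρ.ne' hFφ, abs_mul,
    abs_of_pos (by positivity : 0 < Fint f p / (B * ρ))]
  calc Fint f p / (B * ρ) * |f (p + η₁ ρ) - deriv f p * η₁ ρ - (f (p + η₂ ρ) - deriv f p * η₂ ρ)|
      ≤ Fint f p / (B * ρ) * (3 * Real.exp (3 * M * S) / (f p * Fint f p ^ 2) * δ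
          * |η₁ ρ - η₂ ρ|) := by
        gcongr
    _ = 3 * M * Real.exp (3 * M * S) / B / ρ * S * |η₁ ρ - η₂ ρ| := by
        simp only [δ]; field_simp [hfp.ne', hFp.ne']
    _ ≤ 3 * M * Real.exp (3 * M * K) / B / ρ * S * |η₁ ρ - η₂ ρ| := by
        gcongr

theorem stmt9_general (f φ η₁ η₂ : ℝ → ℝ) (s₀ B M : ℝ)
    (hf : ContDiffOn ℝ 2 f (Set.Ioi s₀))
    (hfpos : ∀ s, s₀ < s → 0 < f s)
    (hfint : ∀ s, s₀ < s → IntegrableOn (fun τ => 1 / f τ) (Set.Ioi s))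
    (hB : 1 ≤ B)
    (hf2a : Tendsto (fun s => deriv f s * Fint f s) atTop (nhds 1))
    (hf2b : Tendsto (fun s => invB2 f (Fint f) s) atTop (nhds (1 / B)))
    (hφ : ∀ ρ > (1 : ℝ), s₀ < φ ρ ∧ Fint f (φ ρ) = (B / 4) * ρ * Real.exp (-ρ + 1))
    (hM : 0 < M)
    (hη : ∃ ρ₁ > (1 : ℝ), ∀ ρ ≥ ρ₁,
      |η₁ ρ| ≤ M * f (φ ρ) * Fint f (φ ρ) *
          sSup ((fun τ => eps1 f φ B τ + eps2 f φ B τ) '' Set.Ici ρ)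
      ∧ |η₂ ρ| ≤ M * f (φ ρ) * Fint f (φ ρ) *
          sSup ((fun τ => eps1 f φ B τ + eps2 f φ B τ) '' Set.Ici ρ)) :
    ∃ ρ₀ > (1 : ℝ), ∃ C > (0 : ℝ), ∀ ρ ≥ ρ₀,
      |Nop f φ η₁ ρ - Nop f φ η₂ ρ|
        ≤ (C / ρ) * sSup ((fun τ => eps1 f φ B τ + eps2 f φ B τ) '' Set.Ici ρ)
            * |η₁ ρ - η₂ ρ| := by
  obtain ⟨ρ₁, -, hηρ₁⟩ := hη
  obtain ⟨K, hK₀, hSK⟩ := exists_eventually_sSup_image_Ici_le fun τ => eps1 f φ B τ + eps2 f φ B τ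
  have hB₀ : 0 < B := by linarith
  set θ := 1 / (2 * (M * K + 1))
  have hθ₀ : 0 < θ := by positivity
  have hθ : θ ≤ 1 / 2 := by
    rw [div_le_div_iff₀ (by positivity) two_pos]; nlinarith [mul_nonneg hM.le hK₀]
  have hθMK : θ * (M * K) ≤ 1 / 2 := by
    rw [div_mul_eq_mul_div, div_le_div_iff₀ (by positivity) two_pos]; linarith
  obtain ⟨s₁, -, hreg⟩ := exists_tailRegular hf hfpos hfint hf2a hf2b hθ₀ hθ
  obtain ⟨ρ₀, hρ₀⟩ := eventually_atTop.1 ((eventually_ge_atTop ρ₁).and (hSK.and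
    ((tendsto_atTop_of_Fint_eq hfpos hfint hφ).eventually_ge_atTop
      (s₁ + 2 * (M * K) * (f s₁ * Fint f s₁)))))
  refine ⟨max ρ₀ 2, by linarith [le_max_right ρ₀ 2], 3 * M * Real.exp (3 * M * K) / B,
    by positivity, fun ρ hρ => ?_⟩
  obtain ⟨hρρ₁, hSρ, hφρ⟩ := hρ₀ ρ (le_of_max_le_left hρ)
  have hρ₁ : 1 < ρ := by linarith [le_of_max_le_right hρ]
  have hS₀ : 0 ≤ sSup ((fun τ => eps1 f φ B τ + eps2 f φ B τ) '' Ici ρ) :=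
    Real.sSup_nonneg <| by rintro _ ⟨τ, -, rfl⟩; exact add_nonneg (abs_nonneg _) (abs_nonneg _)
  exact hreg.abs_Nop_sub_le hB₀ (by linarith) hM.le hS₀ hSρ hθMK hφρ (hφ ρ hρ₁).2
    (hηρ₁ ρ hρρ₁).1 (hηρ₁ ρ hρρ₁).2

/-- Lemma 2.3: Lipschitz-type contraction estimate for the nonlinear term `N`
on functions of size `O(f(φ)F(φ) sup_{τ ≥ ρ}(ε₁+ε₂))`. -/
theorem stmt9 (f φ η₁ η₂ : ℝ → ℝ) (s₀ B M : ℝ) (hs₀ : 0 < s₀)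
    (hf : ContDiffOn ℝ 2 f (Set.Ioi s₀))
    (hfpos : ∀ s, s₀ < s → 0 < f s)
    (hf' : ∀ s, s₀ < s → 0 < deriv f s)
    (hfint : ∀ s, s₀ < s → IntegrableOn (fun τ => 1 / f τ) (Set.Ioi s))
    (hB : 1 ≤ B)
    (hf2a : Tendsto (fun s => deriv f s * Fint f s) atTop (nhds 1))
    (hf2b : Tendsto (fun s => invB2 f (Fint f) s) atTop (nhds (1 / B)))
    (hφ : ∀ ρ > (1 : ℝ), s₀ < φ ρ ∧ Fint f (φ ρ) = (B / 4) * ρ * Real.exp (-ρ + 1))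
    (hM : 0 < M)
    (hη : ∃ ρ₁ > (1 : ℝ), ∀ ρ ≥ ρ₁,
      |η₁ ρ| ≤ M * f (φ ρ) * Fint f (φ ρ) *
          sSup ((fun τ => eps1 f φ B τ + eps2 f φ B τ) '' Set.Ici ρ)
      ∧ |η₂ ρ| ≤ M * f (φ ρ) * Fint f (φ ρ) *
          sSup ((fun τ => eps1 f φ B τ + eps2 f φ B τ) '' Set.Ici ρ)) :
    ∃ ρ₀ > (1 : ℝ), ∃ C > (0 : ℝ), ∀ ρ ≥ ρ₀,
      |Nop f φ η₁ ρ - Nop f φ η₂ ρ|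
        ≤ (C / ρ) * sSup ((fun τ => eps1 f φ B τ + eps2 f φ B τ) '' Set.Ici ρ)
            * |η₁ ρ - η₂ ρ| :=
  stmt9_general f φ η₁ η₂ s₀ B M hf hfpos hfint hB hf2a hf2b hφ hM hη
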